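/- Let (Ω, μ) be a probability space, let ν_g > 2 and ν_v > 2 be real numbers, and let g, g', v, v' : Ω → ℝᵖ be random vectors with all components square-integrable, means m_g = E[g], m_g' = E[g'], m_v = E[v], m_v' = E[v'], and cross-covariances E[(g − m_g)(g' − m_g')ᵀ] = (ν_g/(ν_g − 2)) κ_g and E[(v − m_v)(v' − m_v')ᵀ] = (ν_v/(ν_v − 2)) κ_v for p×p real matrices κ_g, κ_v. Assume g is independent of v', and v is independent of g'. Define ν_e := (ν_g + ν_v)/2 and κ_e := ((ν_e − 2)/ν_e) · ( (ν_g/(ν_g − 2)) κ_g + (ν_v/(ν_v − 2)) κ_v ). Then ν_e > 2, and the random vector e := g + v matches the first two moments of a Student's-t process with parameters (m_g + m_v, κ_e, ν_e): namely E[e] = m_g + m_v and E[(e − E[e])((g' + v') − E[g' + v'])ᵀ] = (ν_e/(ν_e − 2)) κ_e. -/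

import Mathlib

open MeasureTheory ProbabilityTheory

lemma covariance_add_add_of_indepFun {Ω : Type*} [MeasurableSpace Ω] {μ : Measure Ω}
    [IsFiniteMeasure μ] {X₁ X₂ Y₁ Y₂ : Ω → ℝ} (hX₁ : MemLp X₁ 2 μ) (hX₂ : MemLp X₂ 2 μ)
    (hY₁ : MemLp Y₁ 2 μ) (hY₂ : MemLp Y₂ 2 μ) (h₁₂ : IndepFun X₁ Y₂ μ) (h₂₁ : IndepFun X₂ Y₁ μ) :
    cov[X₁ + X₂, Y₁ + Y₂; μ] = cov[X₁, Y₁; μ] + cov[X₂, Y₂; μ] := by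
  rw [covariance_add_left hX₁ hX₂ (hY₁.add hY₂), covariance_add_right hX₁ hY₁ hY₂,
    covariance_add_right hX₂ hY₁ hY₂, h₁₂.covariance_eq_zero hX₁ hY₂,
    h₂₁.covariance_eq_zero hX₂ hY₁, add_zero, zero_add]

/-- Proposition 3: moment matching for the sum of two independent Student's-t process
values with `ν_e = (ν_g + ν_v)/2` and
`κ_e = ((ν_e−2)/ν_e)((ν_g/(ν_g−2))κ_g + (ν_v/(ν_v−2))κ_v)`. -/
theorem stp_sum_moment_matching
    {Ω : Type*} [MeasurableSpace Ω] (μ : Measure Ω) [IsProbabilityMeasure μ]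
    {p : ℕ} (νg νv : ℝ) (hνg : 2 < νg) (hνv : 2 < νv)
    (g g' v v' : Ω → Fin p → ℝ)
    (hg : ∀ i, MemLp (fun ω => g ω i) 2 μ)
    (hg' : ∀ i, MemLp (fun ω => g' ω i) 2 μ)
    (hv : ∀ i, MemLp (fun ω => v ω i) 2 μ)
    (hv' : ∀ i, MemLp (fun ω => v' ω i) 2 μ)
    (mg mg' mv mv' : Fin p → ℝ)
    (hmg : ∀ i, mg i = ∫ ω, g ω i ∂μ)
    (hmg' : ∀ i, mg' i = ∫ ω, g' ω i ∂μ)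
    (hmv : ∀ i, mv i = ∫ ω, v ω i ∂μ)
    (hmv' : ∀ i, mv' i = ∫ ω, v' ω i ∂μ)
    (κg κv : Matrix (Fin p) (Fin p) ℝ)
    (hκg : ∀ i j, (∫ ω, (g ω i - mg i) * (g' ω j - mg' j) ∂μ) = (νg / (νg - 2)) • κg i j)
    (hκv : ∀ i j, (∫ ω, (v ω i - mv i) * (v' ω j - mv' j) ∂μ) = (νv / (νv - 2)) • κv i j)
    (hgv' : IndepFun g v' μ)
    (hvg' : IndepFun v g' μ)
    (νe : ℝ) (hνe : νe = (νg + νv) / 2)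
    (κe : Matrix (Fin p) (Fin p) ℝ)
    (hκe : κe = ((νe - 2) / νe) • ((νg / (νg - 2)) • κg + (νv / (νv - 2)) • κv))
    (e e' : Ω → Fin p → ℝ)
    (he : e = fun ω => g ω + v ω)
    (he' : e' = fun ω => g' ω + v' ω) :
    2 < νe ∧
    (∀ i, (∫ ω, e ω i ∂μ) = mg i + mv i) ∧
    (∀ i j, (∫ ω, (e ω i - ∫ ω', e ω' i ∂μ) * (e' ω j - ∫ ω', e' ω' j ∂μ) ∂μ) =
      ((νe / (νe - 2)) • κe) i j) := by
  have hνe2 : 2 < νe := by rw [hνe]; linarith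
  have hmean : ∀ i, ∫ ω, e ω i ∂μ = mg i + mv i := fun i => by
    rw [he, hmg, hmv]
    exact integral_add ((hg i).integrable one_le_two) ((hv i).integrable one_le_two)
  refine ⟨hνe2, hmean, fun i j => ?_⟩
  subst he he'
  change cov[(fun ω => g ω i) + (fun ω => v ω i), (fun ω => g' ω j) + (fun ω => v' ω j); μ] = _
  rw [covariance_add_add_of_indepFun (hg i) (hv i) (hg' j) (hv' j)
    (hgv'.comp (measurable_pi_apply i) (measurable_pi_apply j))
    (hvg'.comp (measurable_pi_apply i) (measurable_pi_apply j))]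
  simp only [covariance, ← hmg i, ← hmg' j, ← hmv i, ← hmv' j, hκg, hκv]
  rw [hκe, smul_smul, div_mul_div_cancel₀ (by linarith), div_self (by linarith), one_smul]
  rfl
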